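/- arXiv:2312.09371 — 4 statements merged into one kernel-verified Lean document; each statement's English description precedes it below -/
import Mathlib

section
/- Let v > 2 be an integer. If there exist a perfect matching I of the complete graph K_v and a partition of the edges of K_v that are not in I into 5-star factors of K_v, then v ≡ 12 (mod 30). -/
open Finset

/-- A 5-star `K_{1,5}`: one center joined by edges to 5 leaves. -/
structure Star5 (V : Type*) where
  center : V
  leaves : Finset V
  card_leaves : leaves.card = 5
  center_not_leaf : center ∉ leaves

namespace Star5
variable {V : Type*} [DecidableEq V]

/-- The vertex set of a 5-star. -/
def verts (s : Star5 V) : Finset V := insert s.center s.leaves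

/-- The edge set of a 5-star. -/
def edges (s : Star5 V) : Finset (Sym2 V) := s.leaves.image (fun l => s(s.center, l))

end Star5

/-- A 5-star factor of the complete graph on `V`: pairwise vertex-disjoint 5-stars
covering every vertex. -/
def IsStar5Factor {V : Type*} [DecidableEq V] [Fintype V] (F : Finset (Star5 V)) : Prop :=
  (∀ s ∈ F, ∀ t ∈ F, s ≠ t → Disjoint s.verts t.verts) ∧
  ∀ v : V, ∃ s ∈ F, v ∈ s.verts

/-- All edges used by a set of 5-stars. -/
def factorEdges {V : Type*} [DecidableEq V] (F : Finset (Star5 V)) : Finset (Sym2 V) :=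
  F.biUnion Star5.edges

/-- A perfect matching of the complete graph on `V`, given as a set of edges:
every edge is a genuine edge and every vertex lies in exactly one edge. -/
def IsPerfectMatchingK {V : Type*} (M : Finset (Sym2 V)) : Prop :=
  (∀ e ∈ M, ¬ e.IsDiag) ∧ ∀ v : V, ∃! e, e ∈ M ∧ v ∈ e

/-- `K_v − I` admits a decomposition into `k` 5-star factors: there is a perfect
matching `I = M` of `K_v` and `k` 5-star factors whose edge sets partition the
edges of `K_v` not in `M`. -/
def HasStarDecompInto (v k : ℕ) : Prop :=
  ∃ (M : Finset (Sym2 (Fin v))) (F : Fin k → Finset (Star5 (Fin v))),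
    IsPerfectMatchingK M ∧
    (∀ i, IsStar5Factor (F i)) ∧
    (∀ i, Disjoint (factorEdges (F i)) M) ∧
    ∀ e : Sym2 (Fin v), ¬ e.IsDiag → e ∉ M → ∃! i, e ∈ factorEdges (F i)

/-- `K_v − I` admits a decomposition into 5-star factors. -/
def HasStarDecomp (v : ℕ) : Prop := ∃ k, HasStarDecompInto v k

/-!
Every 5-star factor of `K_v` consists of `v / 6` stars, so `6 ∣ v` and each factor has `5v / 6`
edges. Removing a perfect matching from `K_v` leaves `v(v - 2) / 2` edges, so `k` factors cover
them exactly when `5k = 3(v - 2)`, i.e. `v ≡ 2 (mod 5)`. Together with `v ≡ 0 (mod 6)` this is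
`v ≡ 12 (mod 30)`.
-/

namespace Star5
variable {V : Type*} [DecidableEq V] (s : Star5 V)

lemma card_verts : #s.verts = 6 := by
  rw [verts, card_insert_of_notMem s.center_not_leaf, s.card_leaves]

lemma card_edges : #s.edges = 5 := by
  rw [edges, card_image_of_injective _ fun _ _ => Sym2.congr_right.1, s.card_leaves]

variable {s}

lemma center_mem_of_mem_edges {e : Sym2 V} (he : e ∈ s.edges) : s.center ∈ e := by
  obtain ⟨l, -, rfl⟩ := mem_image.1 he
  exact Sym2.mem_mk_left _ _

lemma mem_verts_of_mem_edges {e : Sym2 V} (he : e ∈ s.edges) {x : V} (hx : x ∈ e) :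
    x ∈ s.verts := by
  obtain ⟨l, hl, rfl⟩ := mem_image.1 he
  rcases Sym2.mem_iff.1 hx with rfl | rfl
  · exact mem_insert_self _ _
  · exact mem_insert_of_mem hl

lemma not_isDiag_of_mem_edges {e : Sym2 V} (he : e ∈ s.edges) : ¬e.IsDiag := by
  obtain ⟨l, hl, rfl⟩ := mem_image.1 he
  rw [Sym2.mk_isDiag_iff]
  rintro rfl
  exact s.center_not_leaf hl

end Star5

lemma mem_factorEdges {V : Type*} [DecidableEq V] {F : Finset (Star5 V)} {e : Sym2 V} :
    e ∈ factorEdges F ↔ ∃ s ∈ F, e ∈ s.edges :=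
  mem_biUnion

lemma not_isDiag_of_mem_factorEdges {V : Type*} [DecidableEq V] {F : Finset (Star5 V)}
    {e : Sym2 V} (he : e ∈ factorEdges F) : ¬e.IsDiag := by
  obtain ⟨s, -, hs⟩ := mem_factorEdges.1 he
  exact Star5.not_isDiag_of_mem_edges hs

namespace IsStar5Factor
variable {V : Type*} [DecidableEq V] [Fintype V] {F : Finset (Star5 V)}

lemma six_mul_card (hF : IsStar5Factor F) : 6 * #F = Fintype.card V := by
  have huniv : (univ : Finset V) = F.biUnion Star5.verts := by
    ext x
    simpa using hF.2 x
  rw [← card_univ, huniv, card_biUnion fun s hs t ht hst => hF.1 s hs t ht hst,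
    sum_const_nat fun s _ => s.card_verts, mul_comm]

lemma card_factorEdges (hF : IsStar5Factor F) : #(factorEdges F) = 5 * #F := by
  have hdisj : (F : Set (Star5 V)).PairwiseDisjoint Star5.edges := by
    intro s hs t ht hst
    refine disjoint_left.2 fun e hes het => disjoint_left.1 (hF.1 s hs t ht hst) ?_
      (Star5.mem_verts_of_mem_edges het (Star5.center_mem_of_mem_edges hes))
    exact Star5.mem_verts_of_mem_edges hes (Star5.center_mem_of_mem_edges hes)
  rw [factorEdges, card_biUnion hdisj, sum_const_nat fun s _ => s.card_edges, mul_comm]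

end IsStar5Factor

lemma IsPerfectMatchingK.two_mul_card {V : Type*} [DecidableEq V] [Fintype V]
    {M : Finset (Sym2 V)} (hM : IsPerfectMatchingK M) : 2 * #M = Fintype.card V := by
  have hcount := sum_card_bipartiteAbove_eq_sum_card_bipartiteBelow
    (s := (univ : Finset V)) (t := M) (r := fun x e => x ∈ e)
  have hvert : ∀ x ∈ (univ : Finset V), #(M.bipartiteAbove (fun x e => x ∈ e) x) = 1 :=
    fun x _ => card_eq_one_iff_existsUnique.2 (by simpa [bipartiteAbove] using hM.2 x)
  have hedge : ∀ e ∈ M, #((univ : Finset V).bipartiteBelow (fun x e => x ∈ e) e) = 2 := by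
    intro e he
    rw [← Sym2.card_toFinset_of_not_isDiag e (hM.1 e he)]
    congr 1
    ext x
    simp [bipartiteBelow]
  rw [sum_const_nat hvert, sum_const_nat hedge, card_univ] at hcount
  omega

lemma card_add_sum_card_factorEdges {V ι : Type*} [DecidableEq V] [Fintype V] [Fintype ι]
    {M : Finset (Sym2 V)} {F : ι → Finset (Star5 V)} (hM : ∀ e ∈ M, ¬e.IsDiag)
    (hdisj : ∀ i, Disjoint (factorEdges (F i)) M)
    (hcover : ∀ e : Sym2 V, ¬e.IsDiag → e ∉ M → ∃! i, e ∈ factorEdges (F i)) :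
    #M + ∑ i, #(factorEdges (F i)) = (Fintype.card V).choose 2 := by
  have hF : ((univ : Finset ι) : Set ι).PairwiseDisjoint (fun i => factorEdges (F i)) := by
    intro i _ j _ hij
    refine disjoint_left.2 fun e hei hej => hij ?_
    obtain ⟨_, _, hu⟩ := hcover e (not_isDiag_of_mem_factorEdges hei)
      (disjoint_left.1 (hdisj i) hei)
    exact (hu i hei).trans (hu j hej).symm
  have hsplit :
      M ∪ univ.biUnion (fun i => factorEdges (F i)) = ({e | ¬e.IsDiag} : Finset (Sym2 V)) := by
    ext e
    simp only [mem_union, mem_biUnion, mem_univ, true_and, mem_filter]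
    constructor
    · rintro (he | ⟨i, hi⟩)
      exacts [hM e he, not_isDiag_of_mem_factorEdges hi]
    · intro he
      by_cases heM : e ∈ M
      exacts [Or.inl heM, Or.inr (hcover e he heM).exists]
  have hMF : Disjoint M (univ.biUnion (fun i => factorEdges (F i))) :=
    (disjoint_biUnion_right _ _ _).2 fun i _ => (hdisj i).symm
  rw [← card_biUnion hF, ← card_union_of_disjoint hMF, hsplit, ← Fintype.card_subtype,
    Sym2.card_subtype_not_diag]

lemma two_mul_choose_two_add_self (n : ℕ) : 2 * n.choose 2 + n = n * n := by
  rw [Nat.choose_two_right, Nat.two_mul_div_two_of_even (Nat.even_mul_pred_self n)]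
  cases n with
  | zero => rfl
  | succ n => rw [Nat.add_sub_cancel]; ring

namespace HasStarDecompInto
variable {v k : ℕ}

lemma six_dvd (h : HasStarDecompInto v k) (hk : 0 < k) : 6 ∣ v := by
  obtain ⟨-, F, -, hF, -⟩ := h
  exact ⟨_, ((hF ⟨0, hk⟩).six_mul_card.trans (Fintype.card_fin v)).symm⟩

lemma edge_count (h : HasStarDecompInto v k) : v * (5 * k + 6) = v * (3 * v) := by
  obtain ⟨M, F, hM, hF, hdisj, hcover⟩ := h
  have hcount := card_add_sum_card_factorEdges hM.1 hdisj hcover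
  have hM2 := hM.two_mul_card
  have hfactor : ∀ i ∈ (univ : Finset (Fin k)), 6 * #(factorEdges (F i)) = 5 * v := by
    intro i _
    have := (hF i).six_mul_card
    rw [(hF i).card_factorEdges]
    rw [Fintype.card_fin] at this
    omega
  have hsum : 6 * ∑ i, #(factorEdges (F i)) = k * (5 * v) := by
    rw [mul_sum, sum_const_nat hfactor, card_univ, Fintype.card_fin]
  rw [Fintype.card_fin] at hcount hM2
  have := two_mul_choose_two_add_self v
  linarith

end HasStarDecompInto

theorem star5_decomposition_necessary :
    ∀ v : ℕ, 2 < v → HasStarDecomp v → v % 30 = 12 := by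
  rintro v hv ⟨k, h⟩
  have hk : 5 * k + 6 = 3 * v := Nat.eq_of_mul_eq_mul_left (by omega) h.edge_count
  obtain ⟨m, rfl⟩ := h.six_dvd (by omega)
  omega
end

section
/- For every integer m ≥ 1 there exist 30m+7 pairwise edge-disjoint 5-star factors of the complete graph on 180m+42 vertices. -/
open Finset

instance {V : Type*} [DecidableEq V] : DecidableEq (Star5 V) := fun s t =>
  decidable_of_iff (s.center = t.center ∧ s.leaves = t.leaves) (by
    cases s; cases t; simp [Star5.mk.injEq])

/- ### Auxiliary development -/

section Map
variable {V V' : Type*} [DecidableEq V] [DecidableEq V']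

def Star5.mapE (e : V ↪ V') (s : Star5 V) : Star5 V' where
  center := e s.center
  leaves := s.leaves.map e
  card_leaves := by simp [s.card_leaves]
  center_not_leaf := by simp [s.center_not_leaf]

lemma Star5.verts_mapE (e : V ↪ V') (s : Star5 V) :
    (s.mapE e).verts = s.verts.map e := by
  simp [Star5.verts, Star5.mapE, Finset.map_insert]

lemma Star5.edges_mapE (e : V ↪ V') (s : Star5 V) :
    (s.mapE e).edges = s.edges.image (Sym2.map e) := by
  simp only [Star5.edges, Star5.mapE, Finset.image_image, Finset.map_eq_image,
    Finset.image_image]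
  rfl

lemma factorEdges_image (e : V ↪ V') (F : Finset (Star5 V)) :
    factorEdges (F.image (Star5.mapE e)) = (factorEdges F).image (Sym2.map e) := by
  simp only [factorEdges, Finset.biUnion_image, Finset.image_biUnion]
  exact Finset.biUnion_congr rfl (fun s _ => Star5.edges_mapE e s)

lemma IsStar5Factor.mapE {V V' : Type*} [DecidableEq V] [DecidableEq V'] [Fintype V] [Fintype V']
    (e : V ≃ V') {F : Finset (Star5 V)} (hF : IsStar5Factor F) :
    IsStar5Factor (F.image (Star5.mapE e.toEmbedding)) := by
  obtain ⟨hdisj, hcov⟩ := hF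
  constructor
  · rintro s' hs' t' ht' hne
    simp only [Finset.mem_image] at hs' ht'
    obtain ⟨s, hs, rfl⟩ := hs'
    obtain ⟨t, ht, rfl⟩ := ht'
    rw [Star5.verts_mapE, Star5.verts_mapE, Finset.disjoint_map]
    exact hdisj s hs t ht (fun h => hne (by rw [h]))
  · intro v'
    obtain ⟨s, hs, hv⟩ := hcov (e.symm v')
    refine ⟨s.mapE e.toEmbedding, Finset.mem_image_of_mem _ hs, ?_⟩
    rw [Star5.verts_mapE, Finset.mem_map]
    exact ⟨e.symm v', hv, by simp⟩

end Map

section Construction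

variable {k : ℕ} [NeZero k]

def star5k (i a : ZMod k) : Star5 (ZMod k × Fin 6) where
  center := (a, 0)
  leaves := (Finset.univ.filter (fun t : Fin 6 => t ≠ 0)).image (fun t => (a + i, t))
  card_leaves := by
    rw [Finset.card_image_of_injective _ (fun x y h => by simpa using h)]
    decide
  center_not_leaf := by
    simp only [Finset.mem_image, Finset.mem_filter, Prod.mk.injEq, not_exists]
    rintro t ⟨⟨-, ht⟩, -, rfl⟩
    exact ht rfl

lemma mem_verts_star5k {i a : ZMod k} {v : ZMod k × Fin 6} :
    v ∈ (star5k i a).verts ↔ (v.2 = 0 ∧ v.1 = a) ∨ (v.2 ≠ 0 ∧ v.1 = a + i) := by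
  simp only [star5k, Star5.verts, Finset.mem_insert, Finset.mem_image, Finset.mem_filter,
    Finset.mem_univ, true_and]
  constructor
  · rintro (rfl | ⟨t, ht, rfl⟩)
    · exact Or.inl ⟨rfl, rfl⟩
    · exact Or.inr ⟨ht, rfl⟩
  · rintro (⟨h0, h1⟩ | ⟨h0, h1⟩)
    · left; rw [← h0, ← h1]
    · right; exact ⟨v.2, h0, by rw [← h1]⟩

def factork (i : ZMod k) : Finset (Star5 (ZMod k × Fin 6)) :=
  Finset.univ.image (star5k i)

lemma isFactor_factork (i : ZMod k) : IsStar5Factor (factork i) := by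
  constructor
  · rintro s hs t ht hne
    simp only [factork, Finset.mem_image] at hs ht
    obtain ⟨a, -, rfl⟩ := hs
    obtain ⟨b, -, rfl⟩ := ht
    rw [Finset.disjoint_left]
    intro v hv hv'
    rw [mem_verts_star5k] at hv hv'
    have hab : a = b := by
      rcases hv with ⟨h0, h1⟩ | ⟨h0, h1⟩ <;> rcases hv' with ⟨h0', h1'⟩ | ⟨h0', h1'⟩
      · rw [← h1, h1']
      · exact absurd h0 h0'
      · exact absurd h0' h0
      · have := h1.symm.trans h1'; exact add_right_cancel this
    exact hne (by rw [hab])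
  · intro v
    by_cases h : v.2 = 0
    · exact ⟨star5k i v.1, Finset.mem_image_of_mem _ (Finset.mem_univ _),
        mem_verts_star5k.mpr (Or.inl ⟨h, rfl⟩)⟩
    · exact ⟨star5k i (v.1 - i), Finset.mem_image_of_mem _ (Finset.mem_univ _),
        mem_verts_star5k.mpr (Or.inr ⟨h, by ring⟩)⟩

lemma mem_factorEdges_factork {i : ZMod k} {e : Sym2 (ZMod k × Fin 6)}
    (he : e ∈ factorEdges (factork i)) :
    ∃ a : ZMod k, ∃ t : Fin 6, t ≠ 0 ∧ e = s((a, 0), (a + i, t)) := by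
  simp only [factorEdges, factork, Finset.mem_biUnion, Finset.mem_image] at he
  obtain ⟨s, ⟨a, -, rfl⟩, hes⟩ := he
  simp only [Star5.edges, star5k, Finset.mem_image, Finset.mem_filter, Finset.mem_univ,
    true_and] at hes
  obtain ⟨l, ⟨t, ht, rfl⟩, rfl⟩ := hes
  exact ⟨a, t, ht, rfl⟩

lemma disjoint_factork {i j : ZMod k} (hij : i ≠ j) :
    Disjoint (factorEdges (factork i)) (factorEdges (factork j)) := by
  rw [Finset.disjoint_left]
  intro e hei hej
  obtain ⟨a, t, ht, rfl⟩ := mem_factorEdges_factork hei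
  obtain ⟨b, u, hu, heq⟩ := mem_factorEdges_factork hej
  rw [Sym2.eq_iff] at heq
  rcases heq with ⟨h1, h2⟩ | ⟨h1, h2⟩
  · rw [Prod.mk.injEq] at h1 h2
    apply hij
    have : a = b := h1.1
    subst this
    exact add_left_cancel h2.1
  · rw [Prod.mk.injEq] at h1
    exact hu h1.2.symm

end Construction

theorem part1_factors_t1 :
    ∀ m : ℕ, 1 ≤ m →
    ∃ F : Fin (30*m+7) → Finset (Star5 (Fin (180*m+42))),
      (∀ i, IsStar5Factor (F i)) ∧
      ∀ i j, i ≠ j → Disjoint (factorEdges (F i)) (factorEdges (F j)) := by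
  intro m _
  set k := 30 * m + 7 with hk
  haveI : NeZero k := ⟨by omega⟩
  have hcard : Fintype.card (ZMod k × Fin 6) = 180 * m + 42 := by
    simp [ZMod.card]
    omega
  let e : (ZMod k × Fin 6) ≃ Fin (180 * m + 42) :=
    Fintype.equivFinOfCardEq hcard
  refine ⟨fun i => (factork (k := k) (i : ZMod k)).image (Star5.mapE e.toEmbedding), ?_, ?_⟩
  · intro i
    exact (isFactor_factork _).mapE e
  · intro i j hij
    rw [factorEdges_image e.toEmbedding, factorEdges_image e.toEmbedding]
    simp only [Equiv.coe_toEmbedding]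
    rw [Finset.disjoint_image (Sym2.map.injective e.injective)]
    apply disjoint_factork
    intro hcast
    apply hij
    have hi := ZMod.val_cast_of_lt (a := (i : ℕ)) (by omega : (i : ℕ) < k)
    have hj := ZMod.val_cast_of_lt (a := (j : ℕ)) (by omega : (j : ℕ) < k)
    have : (i : ℕ) = (j : ℕ) := by rw [← hi, ← hj, hcast]
    exact Fin.ext this
end

section
/- For every integer m ≥ 1 there exist 30m+17 pairwise edge-disjoint 5-star factors of the complete graph on 180m+102 vertices. -/
open Finset

noncomputable instance {V : Type*} : DecidableEq (Star5 V) := Classical.decEq _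

section Transport
variable {V W : Type*} [DecidableEq V] [DecidableEq W]

lemma star5_ext {s t : Star5 V} (hc : s.center = t.center) (hl : s.leaves = t.leaves) :
    s = t := by cases s; cases t; simp_all

/-- Transport a 5-star along an equivalence. -/
def star5Map (e : V ≃ W) (s : Star5 V) : Star5 W where
  center := e s.center
  leaves := s.leaves.image e
  card_leaves := by rw [Finset.card_image_of_injective _ e.injective, s.card_leaves]
  center_not_leaf := by
    simp only [Finset.mem_image, not_exists]
    rintro x ⟨hx, hxe⟩
    exact absurd (e.injective hxe ▸ hx) s.center_not_leaf

lemma star5Map_injective (e : V ≃ W) : Function.Injective (star5Map e) := by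
  intro s t h
  have hc : e s.center = e t.center := congrArg Star5.center h
  have hl : s.leaves.image e = t.leaves.image e := congrArg Star5.leaves h
  exact star5_ext (e.injective hc)
    ((Finset.image_injective e.injective) hl)

lemma verts_star5Map (e : V ≃ W) (s : Star5 V) :
    (star5Map e s).verts = s.verts.image e := by
  simp [Star5.verts, star5Map, Finset.image_insert]

lemma edges_star5Map (e : V ≃ W) (s : Star5 V) :
    (star5Map e s).edges = s.edges.image (Sym2.map e) := by
  simp only [Star5.edges, star5Map, Finset.image_image]
  apply Finset.image_congr
  intro x _
  simp [Sym2.map_pair_eq]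

lemma isStar5Factor_map [Fintype V] [Fintype W] (e : V ≃ W) {F : Finset (Star5 V)}
    (h : IsStar5Factor F) : IsStar5Factor (F.image (star5Map e)) := by
  obtain ⟨hdisj, hcov⟩ := h
  constructor
  · intro s hs t ht hst
    obtain ⟨s', hs', rfl⟩ := Finset.mem_image.mp hs
    obtain ⟨t', ht', rfl⟩ := Finset.mem_image.mp ht
    have hne : s' ≠ t' := fun h => hst (congrArg _ h)
    rw [verts_star5Map, verts_star5Map,
      Finset.disjoint_image e.injective]
    exact hdisj s' hs' t' ht' hne
  · intro w
    obtain ⟨s, hs, hv⟩ := hcov (e.symm w)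
    refine ⟨star5Map e s, Finset.mem_image_of_mem _ hs, ?_⟩
    rw [verts_star5Map, Finset.mem_image]
    exact ⟨e.symm w, hv, e.apply_symm_apply w⟩

lemma factorEdges_map (e : V ≃ W) (F : Finset (Star5 V)) :
    factorEdges (F.image (star5Map e)) = (factorEdges F).image (Sym2.map e) := by
  rw [factorEdges, factorEdges, Finset.image_biUnion, Finset.biUnion_image]
  exact Finset.biUnion_congr rfl fun s _ => edges_star5Map e s

end Transport

section Construction

variable (t : ℕ) [NeZero t]

/-- The model vertex type: `t` centers and `t × 5` leaves. -/
abbrev ModelV (t : ℕ) := ZMod t ⊕ (ZMod t × Fin 5)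

/-- The star with center `a` and leaves `(a+i, j)`, `j ∈ Fin 5`. -/
def mkStar (i a : ZMod t) : Star5 (ModelV t) where
  center := Sum.inl a
  leaves := (Finset.univ : Finset (Fin 5)).image fun j => Sum.inr (a + i, j)
  card_leaves := by
    rw [Finset.card_image_of_injective, Finset.card_univ, Fintype.card_fin]
    intro x y h
    simpa using h
  center_not_leaf := by simp

lemma mem_verts_mkStar {i a : ZMod t} {v : ModelV t} :
    v ∈ (mkStar t i a).verts ↔ v = Sum.inl a ∨ ∃ j : Fin 5, v = Sum.inr (a + i, j) := by
  simp [Star5.verts, mkStar, eq_comm]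

/-- The `i`-th 5-star factor on the model. -/
noncomputable def modelFactor (i : ZMod t) : Finset (Star5 (ModelV t)) :=
  Finset.univ.image (mkStar t i)

lemma isStar5Factor_modelFactor (i : ZMod t) : IsStar5Factor (modelFactor t i) := by
  constructor
  · intro s hs u hu hsu
    rw [modelFactor] at hs hu
    obtain ⟨a, _, rfl⟩ := Finset.mem_image.mp hs
    obtain ⟨b, _, rfl⟩ := Finset.mem_image.mp hu
    have hab : a ≠ b := by
      rintro rfl; exact hsu rfl
    rw [Finset.disjoint_left]
    intro v hv hv'
    rw [mem_verts_mkStar] at hv hv'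
    rcases hv with rfl | ⟨j, rfl⟩
    · rcases hv' with h | ⟨k, h⟩
      · exact hab (by simpa using h)
      · simp at h
    · rcases hv' with h | ⟨k, h⟩
      · simp at h
      · simp only [Sum.inr.injEq, Prod.mk.injEq] at h
        exact hab (add_right_cancel h.1)
  · intro v
    rcases v with a | ⟨x, j⟩
    · exact ⟨mkStar t i a, by rw [modelFactor]; exact Finset.mem_image_of_mem _ (Finset.mem_univ _),
        (mem_verts_mkStar t).mpr (Or.inl rfl)⟩
    · refine ⟨mkStar t i (x - i), by rw [modelFactor]; exact Finset.mem_image_of_mem _ (Finset.mem_univ _),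
        (mem_verts_mkStar t).mpr (Or.inr ⟨j, ?_⟩)⟩
      rw [sub_add_cancel]

lemma mem_factorEdges_modelFactor {i : ZMod t} {x : Sym2 (ModelV t)} :
    x ∈ factorEdges (modelFactor t i) →
    ∃ a : ZMod t, ∃ j : Fin 5, x = s(Sum.inl a, Sum.inr (a + i, j)) := by
  intro hx
  rw [factorEdges, Finset.mem_biUnion] at hx
  obtain ⟨s, hs, hxs⟩ := hx
  rw [modelFactor] at hs
  obtain ⟨a, _, rfl⟩ := Finset.mem_image.mp hs
  rw [Star5.edges, Finset.mem_image] at hxs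
  obtain ⟨l, hl, rfl⟩ := hxs
  simp only [mkStar, Finset.mem_image] at hl
  obtain ⟨j, _, rfl⟩ := hl
  exact ⟨a, j, rfl⟩

lemma disjoint_factorEdges_modelFactor {i j : ZMod t} (hij : i ≠ j) :
    Disjoint (factorEdges (modelFactor t i)) (factorEdges (modelFactor t j)) := by
  rw [Finset.disjoint_left]
  intro x hxi hxj
  obtain ⟨a, k, rfl⟩ := mem_factorEdges_modelFactor t hxi
  obtain ⟨b, l, h⟩ := mem_factorEdges_modelFactor t hxj
  rw [Sym2.eq_iff] at h
  rcases h with ⟨h1, h2⟩ | ⟨h1, _⟩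
  · have hab : a = b := by simpa using h1
    have h3 : a + i = b + j := by
      simp only [Sum.inr.injEq, Prod.mk.injEq] at h2
      exact h2.1
    exact hij (by subst hab; exact add_left_cancel h3)
  · simp at h1

end Construction

theorem part1_factors_t5 :
    ∀ m : ℕ, 1 ≤ m →
    ∃ F : Fin (30*m+17) → Finset (Star5 (Fin (180*m+102))),
      (∀ i, IsStar5Factor (F i)) ∧
      ∀ i j, i ≠ j → Disjoint (factorEdges (F i)) (factorEdges (F j)) := by
  intro m _
  set t := 30 * m + 17 with ht
  haveI : NeZero t := ⟨by omega⟩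
  have hcard : Fintype.card (Fin (180*m+102)) = Fintype.card (ModelV t) := by
    simp [ModelV, ZMod.card, ht]
    ring
  let e : Fin (180*m+102) ≃ ModelV t := Fintype.equivOfCardEq hcard
  classical
  refine ⟨fun i => (modelFactor t ((i : ℕ) : ZMod t)).image (star5Map e.symm), ?_, ?_⟩
  · intro i
    exact isStar5Factor_map e.symm (isStar5Factor_modelFactor t _)
  · intro i j hij
    rw [factorEdges_map, factorEdges_map,
      Finset.disjoint_image (Sym2.map.injective e.symm.injective)]
    apply disjoint_factorEdges_modelFactor
    intro h
    apply hij
    have hi := ZMod.val_natCast_of_lt (n := t) (a := (i : ℕ)) i.isLt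
    have hj := ZMod.val_natCast_of_lt (n := t) (a := (j : ℕ)) j.isLt
    have : (i : ℕ) = (j : ℕ) := by rw [← hi, ← hj, h]
    exact Fin.ext this
end

section
/- For every integer m ≥ 1 there exist 30m+2 pairwise edge-disjoint 5-star factors of the complete graph on 180m+12 vertices. -/
open Finset

instance inst_s13 {V : Type*} [DecidableEq V] : DecidableEq (Star5 V) := fun s t =>
  decidable_of_iff (s.center = t.center ∧ s.leaves = t.leaves) <| by
    cases s; cases t; simp [Star5.mk.injEq]

/-! ### Auxiliary construction -/

section Aux

variable {k : ℕ} [NeZero k]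
set_option linter.unusedSectionVars false

/-- The star with center `(0, a)` and leaves `(i, a+j)` for `i = 1,…,5`. -/
def myStar (j a : ZMod k) : Star5 (Fin 6 × ZMod k) where
  center := (0, a)
  leaves := (Finset.univ : Finset (Fin 5)).image (fun i => (i.succ, a + j))
  card_leaves := by
    rw [Finset.card_image_of_injective _ (fun i i' h => by
      simpa using Fin.succ_injective _ (congrArg Prod.fst h))]
    simp
  center_not_leaf := by
    simp only [Finset.mem_image, Finset.mem_univ, true_and, not_exists]
    intro i h
    exact (Fin.succ_ne_zero i) (congrArg Prod.fst h)

lemma mem_verts_myStar {j a : ZMod k} {b : Fin 6} {x : ZMod k} :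
    (b, x) ∈ (myStar j a).verts ↔ (b = 0 ∧ x = a) ∨ (b ≠ 0 ∧ x = a + j) := by
  unfold Star5.verts myStar
  simp only [Finset.mem_insert, Finset.mem_image, Finset.mem_univ, true_and, Prod.mk.injEq,
    Prod.ext_iff]
  constructor
  · rintro (⟨h1, h2⟩ | ⟨i, h1, h2⟩)
    · exact Or.inl ⟨h1, h2⟩
    · exact Or.inr ⟨h1 ▸ Fin.succ_ne_zero i, h2.symm⟩
  · rintro (⟨h1, h2⟩ | ⟨h1, h2⟩)
    · exact Or.inl ⟨h1, h2⟩
    · obtain ⟨i, hi⟩ := Fin.exists_succ_eq.mpr h1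
      exact Or.inr ⟨i, hi, h2.symm⟩

lemma mem_edges_myStar {j a : ZMod k} {e : Sym2 (Fin 6 × ZMod k)} :
    e ∈ (myStar j a).edges ↔ ∃ i : Fin 5, e = s(((0 : Fin 6), a), (i.succ, a + j)) := by
  unfold Star5.edges myStar
  simp only [Finset.mem_image, Finset.mem_univ, true_and]
  constructor
  · rintro ⟨l, ⟨i, hi⟩, hl⟩
    exact ⟨i, by rw [← hl, ← hi]⟩
  · rintro ⟨i, hi⟩
    exact ⟨(i.succ, a + j), ⟨i, rfl⟩, hi.symm⟩

/-- The `j`-th factor. -/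
def myFactor (j : ZMod k) : Finset (Star5 (Fin 6 × ZMod k)) :=
  (Finset.univ : Finset (ZMod k)).image (myStar j)

lemma isStar5Factor_myFactor (j : ZMod k) : IsStar5Factor (myFactor j) := by
  constructor
  · intro s hs t ht hst
    simp only [myFactor, Finset.mem_image, Finset.mem_univ, true_and] at hs ht
    obtain ⟨a, rfl⟩ := hs
    obtain ⟨a', rfl⟩ := ht
    rw [Finset.disjoint_left]
    rintro ⟨b, x⟩ h1 h2
    rw [mem_verts_myStar] at h1 h2
    rcases h1 with ⟨hb, hx⟩ | ⟨hb, hx⟩ <;> rcases h2 with ⟨hb', hx'⟩ | ⟨hb', hx'⟩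
    · exact hst (congrArg (myStar j) (hx.symm.trans hx'))
    · exact hb' hb
    · exact hb hb'
    · exact hst (congrArg (myStar j) (add_right_cancel (hx.symm.trans hx')))
  · rintro ⟨b, x⟩
    by_cases hb : b = 0
    · exact ⟨myStar j x, by simp [myFactor], mem_verts_myStar.mpr (Or.inl ⟨hb, rfl⟩)⟩
    · exact ⟨myStar j (x - j), by simp [myFactor],
        mem_verts_myStar.mpr (Or.inr ⟨hb, by ring⟩)⟩

lemma mem_factorEdges_myFactor {j : ZMod k} {e : Sym2 (Fin 6 × ZMod k)} :
    e ∈ factorEdges (myFactor j) ↔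
      ∃ a : ZMod k, ∃ i : Fin 5, e = s(((0 : Fin 6), a), (i.succ, a + j)) := by
  unfold factorEdges myFactor
  simp only [Finset.mem_biUnion, Finset.mem_image, Finset.mem_univ, true_and]
  constructor
  · rintro ⟨s, ⟨a, rfl⟩, hs⟩
    obtain ⟨i, hi⟩ := mem_edges_myStar.mp hs
    exact ⟨a, i, hi⟩
  · rintro ⟨a, i, hi⟩
    exact ⟨myStar j a, ⟨a, rfl⟩, mem_edges_myStar.mpr ⟨i, hi⟩⟩

lemma disjoint_factorEdges_myFactor {j j' : ZMod k} (h : j ≠ j') :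
    Disjoint (factorEdges (myFactor j)) (factorEdges (myFactor j')) := by
  rw [Finset.disjoint_left]
  intro e he he'
  obtain ⟨a, i, rfl⟩ := mem_factorEdges_myFactor.mp he
  obtain ⟨a', i', heq⟩ := mem_factorEdges_myFactor.mp he'
  rw [Sym2.eq_iff] at heq
  rcases heq with ⟨h1, h2⟩ | ⟨h1, h2⟩
  · have ha : a = a' := (Prod.ext_iff.mp h1).2
    have := (Prod.ext_iff.mp h2).2
    rw [ha] at this
    exact h (add_left_cancel this)
  · exact Fin.succ_ne_zero i' ((Prod.ext_iff.mp h1).1).symm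

end Aux

/-! ### Transporting along an equivalence -/

/-- Transport a 5-star along an equivalence. -/
def Star5.mapEquiv {V W : Type*} [DecidableEq V] [DecidableEq W] (f : V ≃ W)
    (s : Star5 V) : Star5 W where
  center := f s.center
  leaves := s.leaves.map f.toEmbedding
  card_leaves := by rw [Finset.card_map, s.card_leaves]
  center_not_leaf := by
    intro h
    obtain ⟨x, hx, hfx⟩ := Finset.mem_map.mp h
    exact s.center_not_leaf ((f.injective hfx) ▸ hx)

lemma Star5.mapEquiv_verts {V W : Type*} [DecidableEq V] [DecidableEq W] (f : V ≃ W)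
    (s : Star5 V) : (s.mapEquiv f).verts = s.verts.map f.toEmbedding := by
  simp [Star5.verts, Star5.mapEquiv, Finset.map_insert]

lemma Star5.mapEquiv_edges {V W : Type*} [DecidableEq V] [DecidableEq W] (f : V ≃ W)
    (s : Star5 V) : (s.mapEquiv f).edges = s.edges.image (Sym2.map f) := by
  unfold Star5.edges Star5.mapEquiv
  rw [Finset.image_image]
  ext e
  simp only [Finset.mem_image, Finset.mem_map, Equiv.coe_toEmbedding, Function.comp]
  constructor
  · rintro ⟨l, ⟨x, hx, rfl⟩, rfl⟩
    exact ⟨x, hx, by simp [Sym2.map_pair_eq]⟩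
  · rintro ⟨x, hx, rfl⟩
    exact ⟨f x, ⟨x, hx, rfl⟩, by simp [Sym2.map_pair_eq]⟩

lemma transport_factors {V W : Type*} [DecidableEq V] [Fintype V] [DecidableEq W] [Fintype W]
    (f : W ≃ V) {ι : Type*} (F : ι → Finset (Star5 W))
    (h1 : ∀ i, IsStar5Factor (F i))
    (h2 : ∀ i j, i ≠ j → Disjoint (factorEdges (F i)) (factorEdges (F j))) :
    ∃ G : ι → Finset (Star5 V), (∀ i, IsStar5Factor (G i)) ∧
      ∀ i j, i ≠ j → Disjoint (factorEdges (G i)) (factorEdges (G j)) := by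
  refine ⟨fun i => (F i).image (Star5.mapEquiv f), ?_, ?_⟩
  · intro i
    constructor
    · intro s hs t ht hst
      simp only [Finset.mem_image] at hs ht
      obtain ⟨s₀, hs₀, rfl⟩ := hs
      obtain ⟨t₀, ht₀, rfl⟩ := ht
      have hne : s₀ ≠ t₀ := fun h => hst (by rw [h])
      have hd := (h1 i).1 s₀ hs₀ t₀ ht₀ hne
      rw [Star5.mapEquiv_verts, Star5.mapEquiv_verts]
      exact Finset.disjoint_map _ |>.mpr hd
    · intro v
      obtain ⟨s, hs, hv⟩ := (h1 i).2 (f.symm v)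
      refine ⟨s.mapEquiv f, Finset.mem_image_of_mem _ hs, ?_⟩
      rw [Star5.mapEquiv_verts, Finset.mem_map]
      exact ⟨f.symm v, hv, by simp⟩
  · intro i j hij
    have key : ∀ i, factorEdges ((F i).image (Star5.mapEquiv f)) =
        (factorEdges (F i)).image (Sym2.map f) := by
      intro i
      unfold factorEdges
      rw [Finset.image_biUnion, Finset.biUnion_image]
      exact Finset.biUnion_congr rfl (fun s _ => Star5.mapEquiv_edges f s)
    rw [key i, key j]
    exact (Finset.disjoint_image (Sym2.map.injective f.injective)).mpr (h2 i j hij)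

theorem part1_factors_t2 :
    ∀ m : ℕ, 1 ≤ m →
    ∃ F : Fin (30*m+2) → Finset (Star5 (Fin (180*m+12))),
      (∀ i, IsStar5Factor (F i)) ∧
      ∀ i j, i ≠ j → Disjoint (factorEdges (F i)) (factorEdges (F j)) := by
  intro m _
  set k := 30 * m + 2 with hk
  haveI : NeZero k := ⟨by omega⟩
  have hcard : Fintype.card (Fin 6 × ZMod k) = 180 * m + 12 := by
    rw [Fintype.card_prod, Fintype.card_fin, ZMod.card]
    omega
  obtain ⟨G, hG1, hG2⟩ := transport_factors (Fintype.equivFinOfCardEq hcard)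
    (fun i : Fin k => myFactor ((i : ℕ) : ZMod k))
    (fun i => isStar5Factor_myFactor _)
    (fun i j hij => disjoint_factorEdges_myFactor (by
      intro h
      apply hij
      have hi := ZMod.val_cast_of_lt (n := k) i.isLt
      have hj := ZMod.val_cast_of_lt (n := k) j.isLt
      rw [h] at hi
      exact Fin.ext (hi.symm.trans hj)))
  exact ⟨G, hG1, hG2⟩
end
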